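/- arXiv:2002.03979 — 2 statements merged into one kernel-verified Lean document; each statement's English description precedes it below -/
import Mathlib

section
/- Let A be symmetric positive definite with smallest eigenvalue λ_A > 0, step sizes η_k = η k^{-α} with 1/2 < α < 1 and η λ_max(A) ≤ 1, and define Y_i^k = ∏_{p=i+1}^{k} (I - η_p A) and S_i^j = ∑_{k=i+1}^{j} Y_i^k. Then there exists a constant C independent of i, j such that ‖S_i^j‖ ≤ C (i+1)^{α}. -/
open Finset Real Filter Matrix
open scoped Matrix.Norms.L2Operator

/-!
With `c = η λ_A`, each factor `1 - η_p A` is symmetric with quadratic form between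
`(1 - η_p λ_max) |x|² ≥ 0` and `(1 - c p^(-α)) |x|²`, so its norm is at most `1 - c p^(-α)` and
`‖Y_i^k‖ ≤ a_k := ∏_{p=i+1}^k (1 - c p^(-α))`. For the scalar sums, concavity of `t ↦ t^α` shows
that `∑_{k ≤ j} a_k + (2/c) a_j (j + M)^α` does not increase in `j` as soon as
`α M^(α-1) ≤ c/2`, which is possible because `α < 1`. Hence
`∑_k a_k ≤ (2/c) (i + M)^α ≤ (2/c) M^α (i + 1)^α`.
-/

theorem Real.add_one_rpow_le {x α : ℝ} (hx : 0 < x) (hα0 : 0 ≤ α) (hα1 : α ≤ 1) :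
    (x + 1) ^ α ≤ x ^ α + α * x ^ (α - 1) := by
  have hbern : (1 + x⁻¹) ^ α ≤ 1 + α * x⁻¹ :=
    rpow_one_add_le_one_add_mul_self (by linarith [inv_pos.2 hx]) hα0 hα1
  calc (x + 1) ^ α = x ^ α * (1 + x⁻¹) ^ α := by
        rw [← mul_rpow hx.le (by positivity), mul_add, mul_inv_cancel₀ hx.ne', mul_one]
    _ ≤ x ^ α * (1 + α * x⁻¹) := mul_le_mul_of_nonneg_left hbern (by positivity)
    _ = x ^ α + α * x ^ (α - 1) := by rw [rpow_sub_one hx.ne']; ring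

theorem exists_one_le_mul_rpow_sub_one_le {α ε : ℝ} (hα : α < 1) (hε : 0 < ε) :
    ∃ M : ℝ, 1 ≤ M ∧ α * M ^ (α - 1) ≤ ε := by
  have hlim : Tendsto (fun M : ℝ => α * M ^ (α - 1)) atTop (nhds 0) := by
    simpa [neg_sub] using (tendsto_rpow_neg_atTop (sub_pos.2 hα)).const_mul α
  exact ((eventually_ge_atTop 1).and (hlim.eventually (ge_mem_nhds hε))).exists

theorem mul_one_add_rpow_le_of_le_one_sub {α c r x y : ℝ} (hα0 : 0 ≤ α) (hα1 : α ≤ 1)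
    (hc : 0 < c) (hx : 0 < x) (hy : 0 < y) (hxy : x ≤ y + 1) (hαy : α * y ^ (α - 1) ≤ c / 2)
    (hr : r ≤ 1 - c * x ^ (-α)) :
    r * (1 + 2 / c * (y + 1) ^ α) ≤ 2 / c * y ^ α := by
  have hx0 : 0 ≤ x ^ (-α) := rpow_nonneg hx.le _
  have hxy' : 1 ≤ x ^ (-α) * (y + 1) ^ α := by
    rw [rpow_neg hx.le, inv_mul_eq_div, one_le_div (by positivity)]
    exact rpow_le_rpow hx.le hxy hα0
  have hconc := add_one_rpow_le hy hα0 hα1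
  have hK : 0 ≤ c / 2 + (y + 1) ^ α := by positivity
  rw [← mul_le_mul_iff_of_pos_left (by positivity : 0 < c / 2)]
  calc c / 2 * (r * (1 + 2 / c * (y + 1) ^ α)) = r * (c / 2 + (y + 1) ^ α) := by
        field_simp
    _ ≤ (1 - c * x ^ (-α)) * (c / 2 + (y + 1) ^ α) := mul_le_mul_of_nonneg_right hr hK
    _ ≤ c / 2 * (2 / c * y ^ α) := by
        field_simp
        nlinarith [mul_nonneg (mul_nonneg hc.le hc.le) hx0]

theorem sum_prod_Ioc_le_two_div_mul_rpow {α c M : ℝ} (hα0 : 0 ≤ α) (hα1 : α ≤ 1) (hc : 0 < c)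
    (hM : 0 < M) (hαM : α * M ^ (α - 1) ≤ c / 2) {r : ℕ → ℝ} (hr0 : ∀ p, 0 ≤ r p)
    (hr : ∀ p, 1 ≤ p → r p ≤ 1 - c * (p : ℝ) ^ (-α)) (i j : ℕ) :
    ∑ k ∈ Ioc i j, ∏ p ∈ Ioc i k, r p ≤ 2 / c * ((i : ℝ) + M) ^ α := by
  rcases lt_or_ge j i with hji | hij
  · rw [Ioc_eq_empty_of_le hji.le, sum_empty]
    positivity
  suffices H : ∑ k ∈ Ioc i j, ∏ p ∈ Ioc i k, r p
      + 2 / c * (∏ p ∈ Ioc i j, r p) * ((j : ℝ) + M) ^ α ≤ 2 / c * ((i : ℝ) + M) ^ α by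
    have : 0 ≤ 2 / c * (∏ p ∈ Ioc i j, r p) * ((j : ℝ) + M) ^ α :=
      mul_nonneg (mul_nonneg (by positivity) (prod_nonneg fun p _ => hr0 p)) (by positivity)
    linarith
  induction j, hij using Nat.le_induction with
  | base => simp
  | succ j hij ih =>
    have hy : 0 < (j : ℝ) + M := by positivity
    have hαy : α * ((j : ℝ) + M) ^ (α - 1) ≤ c / 2 :=
      (mul_le_mul_of_nonneg_left (rpow_le_rpow_of_nonpos hM (by linarith [j.cast_nonneg (α := ℝ)])
        (by linarith)) hα0).trans hαM
    have hstep := mul_one_add_rpow_le_of_le_one_sub hα0 hα1 hc (by positivity) hy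
      (by push_cast; linarith) hαy (hr (j + 1) (by omega))
    have hP : 0 ≤ ∏ p ∈ Ioc i j, r p := prod_nonneg fun p _ => hr0 p
    rw [sum_Ioc_succ_top hij, prod_Ioc_succ_top hij]
    rw [show ((j + 1 : ℕ) : ℝ) + M = (j : ℝ) + M + 1 by push_cast; ring]
    nlinarith [mul_le_mul_of_nonneg_left hstep hP]

theorem exists_sum_prod_Ioc_le_mul_rpow {α c : ℝ} (hα0 : 0 ≤ α) (hα1 : α < 1) (hc : 0 < c) :
    ∃ C : ℝ, 0 < C ∧ ∀ r : ℕ → ℝ, (∀ p, 0 ≤ r p) → (∀ p, 1 ≤ p → r p ≤ 1 - c * (p : ℝ) ^ (-α)) →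
      ∀ i j : ℕ, ∑ k ∈ Ioc i j, ∏ p ∈ Ioc i k, r p ≤ C * ((i : ℝ) + 1) ^ α := by
  obtain ⟨M, hM, hαM⟩ := exists_one_le_mul_rpow_sub_one_le hα1 (half_pos hc)
  refine ⟨2 / c * M ^ α, by positivity, fun r hr0 hr i j => ?_⟩
  have hiM : ((i : ℝ) + M) ^ α ≤ M ^ α * ((i : ℝ) + 1) ^ α := by
    rw [← mul_rpow (by positivity) (by positivity)]
    exact rpow_le_rpow (by positivity) (by nlinarith [i.cast_nonneg (α := ℝ)]) hα0
  calc ∑ k ∈ Ioc i j, ∏ p ∈ Ioc i k, r p ≤ 2 / c * ((i : ℝ) + M) ^ α :=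
        sum_prod_Ioc_le_two_div_mul_rpow hα0 hα1.le hc (by linarith) hαM hr0 hr i j
    _ ≤ 2 / c * M ^ α * ((i : ℝ) + 1) ^ α := by
        rw [mul_assoc]; exact mul_le_mul_of_nonneg_left hiM (by positivity)

theorem norm_le_prod_Ioc_norm_mul {R : Type*} [SeminormedRing R] {Y M : ℕ → R} {i : ℕ}
    (hY : ∀ k, i ≤ k → Y (k + 1) = M (k + 1) * Y k) {k : ℕ} (hik : i ≤ k) :
    ‖Y k‖ ≤ (∏ p ∈ Ioc i k, ‖M p‖) * ‖Y i‖ := by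
  induction k, hik using Nat.le_induction with
  | base => simp
  | succ k hik ih =>
    rw [hY k hik, prod_Ioc_succ_top hik, mul_comm (∏ p ∈ Ioc i k, ‖M p‖), mul_assoc]
    exact (norm_mul_le _ _).trans (mul_le_mul_of_nonneg_left ih (norm_nonneg _))

theorem ContinuousLinearMap.norm_le_of_nonneg_of_inner_le {E : Type*} [NormedAddCommGroup E]
    [InnerProductSpace ℝ E] {T : E →L[ℝ] E} (hT : T.IsSymmetric) {b : ℝ} (hb : 0 ≤ b)
    (hpos : ∀ x, 0 ≤ inner ℝ (T x) x) (hle : ∀ x, inner ℝ (T x) x ≤ b * ‖x‖ ^ 2) :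
    ‖T‖ ≤ b := by
  rw [T.norm_eq_iSup_rayleighQuotient hT]
  refine ciSup_le fun x => ?_
  rw [rayleighQuotient, reApplyInnerSelf_apply, RCLike.re_to_real, abs_div, abs_sq,
    abs_of_nonneg (hpos x)]
  exact div_le_of_le_mul₀ (sq_nonneg _) hb (hle x)

namespace Matrix

variable {n : Type*} [Fintype n] [DecidableEq n]

theorem real_inner_toEuclideanCLM (A : Matrix n n ℝ) (x : EuclideanSpace ℝ n) :
    inner ℝ (toEuclideanCLM (𝕜 := ℝ) A x) x = x.ofLp ⬝ᵥ A *ᵥ x.ofLp := by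
  rw [EuclideanSpace.inner_eq_star_dotProduct, ofLp_toEuclideanCLM]
  simp

theorem l2_opNorm_one_le : ‖(1 : Matrix n n ℝ)‖ ≤ 1 := by
  rw [cstar_norm_def, map_one]
  exact ContinuousLinearMap.norm_id_le

theorem l2_opNorm_one_sub_smul_le [Nonempty n] {A : Matrix n n ℝ} (hA : A.IsHermitian)
    {lamA lamMax t : ℝ} (hmin : ∀ v : n → ℝ, lamA * (v ⬝ᵥ v) ≤ v ⬝ᵥ A *ᵥ v)
    (hmax : ∀ v : n → ℝ, v ⬝ᵥ A *ᵥ v ≤ lamMax * (v ⬝ᵥ v)) (ht : 0 ≤ t) (htA : t * lamMax ≤ 1) :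
    ‖1 - t • A‖ ≤ 1 - t * lamA := by
  have hlam : lamA ≤ lamMax := by
    obtain ⟨i⟩ := ‹Nonempty n›
    simpa using (hmin (Pi.single i 1)).trans (hmax (Pi.single i 1))
  have hsymm : (toEuclideanCLM (𝕜 := ℝ) (1 - t • A)).IsSymmetric :=
    isSymmetric_toEuclideanLin_iff.mpr (isHermitian_one.sub (hA.smul (IsSelfAdjoint.all t)))
  have hinner : ∀ x : EuclideanSpace ℝ n, inner ℝ (toEuclideanCLM (𝕜 := ℝ) (1 - t • A) x) x
      = x.ofLp ⬝ᵥ x.ofLp - t * (x.ofLp ⬝ᵥ A *ᵥ x.ofLp) := fun x => by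
    rw [real_inner_toEuclideanCLM, sub_mulVec, one_mulVec, smul_mulVec, dotProduct_sub,
      dotProduct_smul, smul_eq_mul]
  have hnorm : ∀ x : EuclideanSpace ℝ n, ‖x‖ ^ 2 = x.ofLp ⬝ᵥ x.ofLp := fun x => by
    rw [← real_inner_self_eq_norm_sq, EuclideanSpace.inner_eq_star_dotProduct]
    simp
  rw [cstar_norm_def]
  refine ContinuousLinearMap.norm_le_of_nonneg_of_inner_le hsymm (by nlinarith) (fun x => ?_)
    (fun x => ?_) <;> rw [hinner]
  · have hvv : 0 ≤ x.ofLp ⬝ᵥ x.ofLp := hnorm x ▸ sq_nonneg ‖x‖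
    nlinarith [mul_le_mul_of_nonneg_left (hmax x.ofLp) ht, mul_nonneg (sub_nonneg.2 htA) hvv]
  · rw [hnorm]
    nlinarith [mul_le_mul_of_nonneg_left (hmin x.ofLp) ht]

end Matrix

theorem opNorm_sum_sgd_contraction_prods_le
    (d : ℕ) (A : Matrix (Fin d) (Fin d) ℝ) (hA : A.PosDef)
    (lamA lamMax η α : ℝ) (hlamA : 0 < lamA)
    (hmin : ∀ x : Fin d → ℝ, lamA * (x ⬝ᵥ x) ≤ x ⬝ᵥ A.mulVec x)
    (hmax : ∀ x : Fin d → ℝ, x ⬝ᵥ A.mulVec x ≤ lamMax * (x ⬝ᵥ x))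
    (hη : 0 < η) (hα1 : 1/2 < α) (hα2 : α < 1)
    (hstep : η * lamMax ≤ 1)
    (ηk : ℕ → ℝ) (hηk : ∀ k : ℕ, ηk k = η * (k:ℝ) ^ (-α))
    (Y : ℕ → ℕ → Matrix (Fin d) (Fin d) ℝ)
    (hY0 : ∀ i : ℕ, Y i i = 1)
    (hYrec : ∀ i k : ℕ, i ≤ k → Y i (k+1) = (1 - ηk (k+1) • A) * Y i k)
    (S : ℕ → ℕ → Matrix (Fin d) (Fin d) ℝ)
    (hS : ∀ i j : ℕ, S i j = ∑ k ∈ Finset.Icc (i+1) j, Y i k) :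
    ∃ C : ℝ, 0 < C ∧ ∀ i j : ℕ, ‖S i j‖ ≤ C * ((i:ℝ) + 1) ^ α := by
  rcases isEmpty_or_nonempty (Fin d) with hd | hd
  · exact ⟨1, one_pos, fun i j => by rw [Subsingleton.elim (S i j) 0, norm_zero]; positivity⟩
  obtain ⟨C, hC, hsum⟩ := exists_sum_prod_Ioc_le_mul_rpow (by linarith) hα2 (mul_pos hη hlamA)
  have hfactor : ∀ p : ℕ, 1 ≤ p → ‖1 - ηk p • A‖ ≤ 1 - η * lamA * (p : ℝ) ^ (-α) := by
    intro p hp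
    have hp0 : 0 ≤ (p : ℝ) ^ (-α) := rpow_nonneg p.cast_nonneg _
    have hp1 : (p : ℝ) ^ (-α) ≤ 1 :=
      rpow_le_one_of_one_le_of_nonpos (by exact_mod_cast hp) (by linarith)
    refine (l2_opNorm_one_sub_smul_le hA.1 hmin hmax (t := ηk p) (by rw [hηk]; positivity)
      (by rw [hηk]; nlinarith [mul_nonneg hp0 (sub_nonneg.2 hstep)])).trans_eq ?_
    rw [hηk]
    ring
  refine ⟨C, hC, fun i j => ?_⟩
  have hY : ∀ k ∈ Ioc i j, ‖Y i k‖ ≤ ∏ p ∈ Ioc i k, ‖1 - ηk p • A‖ := fun k hk => by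
    have h := norm_le_prod_Ioc_norm_mul (M := fun p => 1 - ηk p • A) (hYrec i) (mem_Ioc.1 hk).1.le
    rw [hY0] at h
    exact h.trans (mul_le_of_le_one_right (prod_nonneg fun _ _ => norm_nonneg _) l2_opNorm_one_le)
  calc ‖S i j‖ ≤ ∑ k ∈ Ioc i j, ‖Y i k‖ := by
        rw [hS, Icc_add_one_left_eq_Ioc]
        exact norm_sum_le _ _
    _ ≤ ∑ k ∈ Ioc i j, ∏ p ∈ Ioc i k, ‖1 - ηk p • A‖ := sum_le_sum hY
    _ ≤ C * ((i : ℝ) + 1) ^ α := hsum _ (fun _ => norm_nonneg _) hfactor i j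
end

section
/- Let a_k = ⌊C k^{β}⌋ with C > 0, β > 1 and a_1 = 1, and for i ∈ [a_m, a_{m+1}) set t_i = a_m and l_i = i - t_i + 1. If a_M ≤ n < a_{M+1}, then the ratio (∑_{i=1}^{n} l_i) / (∑_{i=1}^{a_{M+1}-1} l_i) converges to 1 as M → ∞. -/
open Finset Real Filter

/-! The numerator lies between the partial sums up to `a M - 1` and `a (M + 1) - 1`, so it
suffices that the last batch sum `B_M = d_M (d_M + 1) / 2`, `d_M = a (M + 1) - a M`, is negligible
against the total `S_M`. By Bernoulli's inequality `d_M = O(M ^ (β - 1))`, so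
`B_M = O(M ^ (2β - 2))`, while Cauchy–Schwarz over the batches gives
`S_M ≥ (∑ d_k)² / (2M) ≳ M ^ (2β - 1)`. Hence `B_M / S_M = O(1 / M)`. -/

theorem rpow_add_one_sub_rpow_le {β y : ℝ} (hβ : 1 ≤ β) (hy : 0 ≤ y) :
    (y + 1) ^ β - y ^ β ≤ β * (y + 1) ^ (β - 1) := by
  have hy1 : 0 < y + 1 := by linarith
  have bernoulli := one_add_mul_self_le_rpow_one_add (s := -1 / (y + 1))
    (by rw [neg_div, neg_le_neg_iff, div_le_one hy1]; linarith) hβ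
  rw [show 1 + -1 / (y + 1) = y / (y + 1) by field_simp; ring, div_rpow hy hy1.le,
    le_div_iff₀ (rpow_pos_of_pos hy1 β)] at bernoulli
  rw [rpow_sub_one hy1.ne']
  linarith [show (1 + β * (-1 / (y + 1))) * (y + 1) ^ β
    = (y + 1) ^ β - β * ((y + 1) ^ β / (y + 1)) by ring]

theorem sum_Ico_sub_add_one_eq {s e : ℕ} (h : s ≤ e) :
    ∑ i ∈ Ico s e, ((i - s + 1 : ℕ) : ℝ) = ((e : ℝ) - s) * ((e : ℝ) - s + 1) / 2 := by
  induction e, h using Nat.le_induction with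
  | base => simp
  | succ e hse ih =>
    rw [sum_Ico_succ_top hse, ih]
    push_cast [Nat.cast_sub hse]
    ring

theorem sum_Ico_eq_sum_Ico_blocks {M : Type*} [AddCommMonoid M] (f : ℕ → M) {a : ℕ → ℕ}
    {m n : ℕ} (hmn : m ≤ n) (ha : MonotoneOn a (Set.Icc m n)) :
    ∑ i ∈ Ico (a m) (a n), f i = ∑ k ∈ Ico m n, ∑ i ∈ Ico (a k) (a (k + 1)), f i := by
  induction n, hmn using Nat.le_induction with
  | base => simp
  | succ n hmn ih =>
    have hn : n ∈ Set.Icc m (n + 1) := ⟨hmn, n.le_succ⟩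
    rw [sum_Ico_succ_top hmn, ← ih (ha.mono (Set.Icc_subset_Icc_right n.le_succ)),
      sum_Ico_consecutive _ (ha ⟨le_rfl, hmn.trans n.le_succ⟩ hn hmn)
        (ha hn ⟨hmn.trans n.le_succ, le_rfl⟩ n.le_succ)]

theorem sq_sub_le_mul_sum_sq_sub (f : ℕ → ℝ) {m n : ℕ} (hmn : m ≤ n) :
    (f n - f m) ^ 2 ≤ ((n : ℝ) - m) * ∑ k ∈ Ico m n, (f (k + 1) - f k) ^ 2 := by
  have := sq_sum_le_card_mul_sum_sq (s := Ico m n) (f := fun k => f (k + 1) - f k)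
  rwa [sum_Ico_sub f hmn, Nat.card_Ico, Nat.cast_sub hmn] at this

theorem tendsto_div_of_sub_le_of_le {ι : Type*} {L : Filter ι} {N S B : ι → ℝ}
    (hB : Tendsto (fun i => B i / S i) L (nhds 0)) (hS : ∀ᶠ i in L, 0 < S i)
    (hN : ∀ᶠ i in L, S i - B i ≤ N i ∧ N i ≤ S i) :
    Tendsto (fun i => N i / S i) L (nhds 1) := by
  have hlow : Tendsto (fun i => 1 - B i / S i) L (nhds 1) := by
    simpa using tendsto_const_nhds.sub hB
  refine tendsto_of_tendsto_of_tendsto_of_le_of_le' hlow tendsto_const_nhds ?_ ?_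
  · filter_upwards [hS, hN] with i hSi hNi
    rw [one_sub_div hSi.ne']
    exact div_le_div_of_nonneg_right hNi.1 hSi.le
  · filter_upwards [hS, hN] with i hSi hNi
    exact div_le_one_of_le₀ hNi.2 hSi.le

theorem sum_Ico_sub_le_sum_Icc_le {f : ℕ → ℝ} (hf : ∀ i, 0 ≤ f i) {p q r : ℕ} (hp : 1 ≤ p)
    (hpq : p ≤ q) (hqr : q < r) :
    ∑ i ∈ Ico 1 r, f i - ∑ i ∈ Ico p r, f i ≤ ∑ i ∈ Icc 1 q, f i ∧
      ∑ i ∈ Icc 1 q, f i ≤ ∑ i ∈ Ico 1 r, f i := by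
  rw [← sum_Ico_consecutive f hp (hpq.trans hqr.le), add_sub_cancel_right]
  constructor
  · exact sum_le_sum_of_subset_of_nonneg (Ico_subset_Icc_self.trans (Icc_subset_Icc_right hpq))
      fun i _ _ => hf i
  · rw [sum_Ico_consecutive f hp (hpq.trans hqr.le)]
    exact sum_le_sum_of_subset_of_nonneg (Icc_subset_Ico_right hqr) fun i _ _ => hf i

section FloorRpow

variable {C β : ℝ} {a : ℕ → ℕ}

theorem monotoneOn_floor_rpow (hC : 0 ≤ C) (hβ : 0 ≤ β)
    (ha : ∀ k : ℕ, 2 ≤ k → a k = ⌊C * (k : ℝ) ^ β⌋₊) : MonotoneOn a (Set.Ici 2) := by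
  intro j hj k hk hjk
  rw [ha j hj, ha k hk]
  gcongr

theorem eventually_half_rpow_le_floor_sub (hC : 0 < C) (hβ : 0 < β)
    (ha : ∀ k : ℕ, 2 ≤ k → a k = ⌊C * (k : ℝ) ^ β⌋₊) (c : ℝ) :
    ∀ᶠ k : ℕ in atTop, C / 2 * (k : ℝ) ^ β ≤ a k - c := by
  have hlarge := ((tendsto_rpow_atTop hβ).comp tendsto_natCast_atTop_atTop).eventually_ge_atTop
    (2 * (c + 1) / C)
  filter_upwards [eventually_ge_atTop 2, hlarge] with k hk hk_large
  rw [Function.comp_apply, div_le_iff₀' hC] at hk_large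
  have := Nat.lt_floor_add_one (C * (k : ℝ) ^ β)
  rw [← ha k hk] at this
  linarith

theorem floor_rpow_succ_sub_add_one_mul_le (hC : 0 ≤ C) (hβ : 1 ≤ β)
    (ha : ∀ k : ℕ, 2 ≤ k → a k = ⌊C * (k : ℝ) ^ β⌋₊) {k : ℕ} (hk : 2 ≤ k) :
    ((a (k + 1) : ℝ) - a k + 1) * (k + 1) ≤ (C * β + 2) * ((k : ℝ) + 1) ^ β := by
  have hk1 : (1 : ℝ) ≤ k + 1 := by linarith [(k.cast_nonneg : (0:ℝ) ≤ k)]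
  have hupper : (a (k + 1) : ℝ) ≤ C * ((k : ℝ) + 1) ^ β := by
    rw [ha (k + 1) (by omega)]
    exact_mod_cast Nat.floor_le (by positivity)
  have hlower : C * (k : ℝ) ^ β < a k + 1 := by
    rw [ha k hk]; exact Nat.lt_floor_add_one _
  have hmvt := mul_le_mul_of_nonneg_left (rpow_add_one_sub_rpow_le hβ k.cast_nonneg) hC
  have hpow : ((k : ℝ) + 1) ^ (β - 1) * (k + 1) = ((k : ℝ) + 1) ^ β := by
    rw [rpow_sub_one (by positivity), div_mul_cancel₀ _ (by positivity)]
  have hself : (k : ℝ) + 1 ≤ ((k : ℝ) + 1) ^ β := self_le_rpow_of_one_le hk1 hβ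
  calc ((a (k + 1) : ℝ) - a k + 1) * (k + 1)
      ≤ (C * β * ((k : ℝ) + 1) ^ (β - 1) + 2) * (k + 1) := by
        gcongr ?_ * _; linarith
    _ = C * β * ((k : ℝ) + 1) ^ β + 2 * (k + 1) := by rw [add_mul, mul_assoc, hpow]
    _ ≤ (C * β + 2) * ((k : ℝ) + 1) ^ β := by linarith

end FloorRpow

theorem sum_Ico_batch_eq {a l : ℕ → ℕ} {m : ℕ} (ham : a m ≤ a (m + 1))
    (hl : ∀ i, a m ≤ i → i < a (m + 1) → l i = i - a m + 1) :
    ∑ i ∈ Ico (a m) (a (m + 1)), (l i : ℝ)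
      = ((a (m + 1) : ℝ) - a m) * ((a (m + 1) : ℝ) - a m + 1) / 2 := by
  rw [← sum_Ico_sub_add_one_eq ham]
  refine sum_congr rfl fun i hi => ?_
  rw [mem_Ico] at hi
  rw [hl i hi.1 hi.2]

section Batches

variable {a l : ℕ → ℕ} {k₀ : ℕ}

theorem sq_sub_le_two_mul_sum_Ico (ha : MonotoneOn a (Set.Ici k₀))
    (hl : ∀ m, k₀ ≤ m → ∀ i, a m ≤ i → i < a (m + 1) → l i = i - a m + 1)
    {n : ℕ} (hkn : k₀ ≤ n) :
    ((a n : ℝ) - a k₀) ^ 2 ≤ 2 * ((n : ℝ) - k₀) * ∑ i ∈ Ico (a k₀) (a n), (l i : ℝ) := by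
  rw [sum_Ico_eq_sum_Ico_blocks _ hkn (ha.mono Set.Icc_subset_Ici_self), mul_comm 2, mul_assoc,
    mul_sum]
  refine (sq_sub_le_mul_sum_sq_sub (fun k => (a k : ℝ)) hkn).trans ?_
  have : (0 : ℝ) ≤ n - k₀ := by rw [sub_nonneg]; exact_mod_cast hkn
  gcongr with k hk
  have hk₀k := (mem_Ico.mp hk).1
  have hmono : a k ≤ a (k + 1) := ha hk₀k (hk₀k.trans k.le_succ) k.le_succ
  have : (a k : ℝ) ≤ a (k + 1) := by exact_mod_cast hmono
  rw [sum_Ico_batch_eq hmono (hl k hk₀k)]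
  nlinarith

theorem sum_batch_mul_sq_le (ha : MonotoneOn a (Set.Ici k₀))
    (hl : ∀ m, k₀ ≤ m → ∀ i, a m ≤ i → i < a (m + 1) → l i = i - a m + 1)
    (hak₀ : 1 ≤ a k₀) {M : ℕ} (hM : k₀ ≤ M) :
    (∑ i ∈ Ico (a M) (a (M + 1)), (l i : ℝ)) * ((a (M + 1) : ℝ) - a k₀) ^ 2
      ≤ ((a (M + 1) : ℝ) - a M + 1) ^ 2 * (M + 1) * ∑ i ∈ Ico 1 (a (M + 1)), (l i : ℝ) := by
  have hmono : a M ≤ a (M + 1) := ha hM (hM.trans M.le_succ) M.le_succ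
  have : (a M : ℝ) ≤ a (M + 1) := by exact_mod_cast hmono
  have hbatch :
      ∑ i ∈ Ico (a M) (a (M + 1)), (l i : ℝ) ≤ ((a (M + 1) : ℝ) - a M + 1) ^ 2 / 2 := by
    rw [sum_Ico_batch_eq hmono (hl M hM)]
    nlinarith
  have htotal :
      ((a (M + 1) : ℝ) - a k₀) ^ 2 ≤ 2 * (M + 1) * ∑ i ∈ Ico 1 (a (M + 1)), (l i : ℝ) := by
    refine (sq_sub_le_two_mul_sum_Ico ha hl (hM.trans M.le_succ)).trans ?_
    push_cast
    gcongr
    exact sub_le_self _ k₀.cast_nonneg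
  linarith [mul_le_mul hbatch htotal (sq_nonneg _) (by positivity)]

end Batches

theorem eventually_sum_batch_div_sum_Ico_le {C β : ℝ} {a l : ℕ → ℕ} (hC : 0 < C) (hβ : 1 < β)
    (ha : ∀ k : ℕ, 2 ≤ k → a k = ⌊C * (k : ℝ) ^ β⌋₊) {k₀ : ℕ} (hk₀ : 2 ≤ k₀) (hak₀ : 1 ≤ a k₀)
    (hl : ∀ m, k₀ ≤ m → ∀ i, a m ≤ i → i < a (m + 1) → l i = i - a m + 1) :
    ∀ᶠ M : ℕ in atTop, (∑ i ∈ Ico (a M) (a (M + 1)), (l i : ℝ)) /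
      ∑ i ∈ Ico 1 (a (M + 1)), (l i : ℝ) ≤ (2 * (C * β + 2) / C) ^ 2 / (M + 1) := by
  set K : ℝ := 2 * (C * β + 2) / C with hK
  have hmono := (monotoneOn_floor_rpow hC.le (by linarith) ha).mono (Set.Ici_subset_Ici.mpr hk₀)
  filter_upwards [eventually_ge_atTop k₀, (tendsto_add_atTop_nat 1).eventually
    (eventually_half_rpow_le_floor_sub hC (by linarith) ha (a k₀))] with M hM hA
  set A := (a (M + 1) : ℝ) - a k₀
  set D := (a (M + 1) : ℝ) - a M + 1
  set S := ∑ i ∈ Ico 1 (a (M + 1)), (l i : ℝ)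
  set B := ∑ i ∈ Ico (a M) (a (M + 1)), (l i : ℝ)
  push_cast at hA
  have hS : 0 ≤ S := sum_nonneg fun i _ => (l i).cast_nonneg
  have hD : 0 ≤ D := by
    have : (a M : ℝ) ≤ a (M + 1) := by exact_mod_cast hmono hM (hM.trans M.le_succ) M.le_succ
    linarith
  have hA_pos : 0 < A := by
    have : 0 < C / 2 * ((M : ℝ) + 1) ^ β := by positivity
    linarith
  have hKA : D * (M + 1) ≤ K * A := by
    refine (floor_rpow_succ_sub_add_one_mul_le hC.le hβ.le ha (hk₀.trans hM)).trans ?_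
    calc (C * β + 2) * ((M : ℝ) + 1) ^ β = K * (C / 2 * ((M : ℝ) + 1) ^ β) := by
          rw [hK]; field_simp
      _ ≤ K * A := by gcongr
  have hbatch : B * A ^ 2 ≤ D ^ 2 * (M + 1) * S := sum_batch_mul_sq_le hmono hl hak₀ hM
  have hsq := mul_le_mul_of_nonneg_right (pow_le_pow_left₀ (by positivity) hKA 2) hS
  have hB : B * (M + 1) ≤ K ^ 2 * S := le_of_mul_le_mul_right (a := A ^ 2) (by
    nlinarith [mul_le_mul_of_nonneg_right hbatch (by positivity : (0 : ℝ) ≤ M + 1)])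
    (by positivity)
  refine div_le_of_le_mul₀ hS (by positivity) ?_
  rwa [div_mul_eq_mul_div, le_div_iff₀ (by positivity)]

theorem tendsto_sum_batch_div_sum_Ico_zero {C β : ℝ} {a l : ℕ → ℕ} (hC : 0 < C) (hβ : 1 < β)
    (ha : ∀ k : ℕ, 2 ≤ k → a k = ⌊C * (k : ℝ) ^ β⌋₊) {k₀ : ℕ} (hk₀ : 2 ≤ k₀) (hak₀ : 1 ≤ a k₀)
    (hl : ∀ m, k₀ ≤ m → ∀ i, a m ≤ i → i < a (m + 1) → l i = i - a m + 1) :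
    Tendsto (fun M : ℕ => (∑ i ∈ Ico (a M) (a (M + 1)), (l i : ℝ)) /
      ∑ i ∈ Ico 1 (a (M + 1)), (l i : ℝ)) atTop (nhds 0) := by
  have hbound := tendsto_one_div_add_atTop_nhds_zero_nat.const_mul ((2 * (C * β + 2) / C) ^ 2)
  simp only [mul_zero, mul_one_div] at hbound
  exact tendsto_of_tendsto_of_tendsto_of_le_of_le' tendsto_const_nhds hbound
    (Eventually.of_forall fun M => div_nonneg (sum_nonneg fun i _ => (l i).cast_nonneg)
      (sum_nonneg fun i _ => (l i).cast_nonneg))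
    (eventually_sum_batch_div_sum_Ico_le hC hβ ha hk₀ hak₀ hl)

theorem sum_batch_lengths_ratio_tendsto_one_general (C β : ℝ) (hC : 0 < C) (hβ : 1 < β)
    (a : ℕ → ℕ)
    (ha : ∀ k : ℕ, 2 ≤ k → a k = ⌊C * (k:ℝ) ^ β⌋₊)
    (t l : ℕ → ℕ)
    (ht : ∀ m : ℕ, 1 ≤ m → ∀ i : ℕ, a m ≤ i → i < a (m+1) → t i = a m)
    (hl : ∀ i : ℕ, l i = i - t i + 1)
    (n : ℕ → ℕ) (hn : ∀ M : ℕ, 1 ≤ M → a M ≤ n M ∧ n M < a (M+1)) :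
    Tendsto (fun M : ℕ =>
        (∑ i ∈ Finset.Icc 1 (n M), (l i : ℝ)) /
          (∑ i ∈ Finset.Icc 1 (a (M+1) - 1), (l i : ℝ)))
      atTop (nhds 1) := by
  obtain ⟨k₀, hk₀, hak₀⟩ : ∃ k₀, 2 ≤ k₀ ∧ 2 ≤ a k₀ := by
    obtain ⟨k, hk, hak⟩ := ((eventually_ge_atTop 2).and
      (eventually_half_rpow_le_floor_sub hC (by linarith) ha 2)).exists
    have : (2 : ℝ) ≤ a k := by linarith [show 0 ≤ C / 2 * (k : ℝ) ^ β by positivity]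
    exact ⟨k, hk, by exact_mod_cast this⟩
  have hmono := (monotoneOn_floor_rpow hC.le (by linarith) ha).mono (Set.Ici_subset_Ici.mpr hk₀)
  have hbatch : ∀ m, k₀ ≤ m → ∀ i, a m ≤ i → i < a (m + 1) → l i = i - a m + 1 :=
    fun m hm i hi hi' => by rw [hl, ht m (by omega) i hi hi']
  have hIcc (x : ℕ) : Icc 1 (x - 1) = Ico 1 x := by ext; simp only [mem_Icc, mem_Ico]; omega
  simp only [hIcc]
  refine tendsto_div_of_sub_le_of_le
    (tendsto_sum_batch_div_sum_Ico_zero hC hβ ha hk₀ (by omega) hbatch) ?_ ?_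
  · filter_upwards [eventually_ge_atTop k₀] with M hM
    have h1 : 1 ∈ Ico 1 (a (M + 1)) := by
      have := hmono Set.self_mem_Ici (show k₀ ≤ M + 1 by omega) (show k₀ ≤ M + 1 by omega)
      simp only [mem_Ico]; omega
    refine lt_of_lt_of_le ?_ (single_le_sum (fun i _ => (l i).cast_nonneg) h1)
    rw [hl]; positivity
  · filter_upwards [eventually_ge_atTop k₀] with M hM
    have hM1 := hmono Set.self_mem_Ici hM hM
    exact sum_Ico_sub_le_sum_Icc_le (fun i => (l i).cast_nonneg) (by omega) (hn M (by omega)).1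
      (hn M (by omega)).2

theorem sum_batch_lengths_ratio_tendsto_one (C β : ℝ) (hC : 0 < C) (hβ : 1 < β)
    (a : ℕ → ℕ) (ha1 : a 1 = 1)
    (ha : ∀ k : ℕ, 2 ≤ k → a k = ⌊C * (k:ℝ) ^ β⌋₊)
    (t l : ℕ → ℕ)
    (ht : ∀ m : ℕ, 1 ≤ m → ∀ i : ℕ, a m ≤ i → i < a (m+1) → t i = a m)
    (hl : ∀ i : ℕ, l i = i - t i + 1)
    (n : ℕ → ℕ) (hn : ∀ M : ℕ, 1 ≤ M → a M ≤ n M ∧ n M < a (M+1)) :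
    Tendsto (fun M : ℕ =>
        (∑ i ∈ Finset.Icc 1 (n M), (l i : ℝ)) /
          (∑ i ∈ Finset.Icc 1 (a (M+1) - 1), (l i : ℝ)))
      atTop (nhds 1) :=
  sum_batch_lengths_ratio_tendsto_one_general C β hC hβ a ha t l ht hl n hn
end
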